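/- Let p > 0, let A be a real d×d matrix with operator norm ‖A‖, and define u_p(k,t) = |k|^p exp(−(λ(p) − p‖A‖)t). Then u_p satisfies the supersolution inequality: for all k ∈ ℝ^d and t ≥ 0, u_p(k,t) ≥ e^{-t} |e^{-tA}k|^p + ∫₀ᵗ e^{-(t-τ)} L[u_p(·,τ)](e^{-(t-τ)A}k) dτ. -/

import Mathlib

open MeasureTheory
open scoped Classical Matrix
noncomputable section

/-- ℝ^d with the Euclidean structure. -/
abbrev Rd (d : ℕ) := EuclideanSpace ℝ (Fin d)

/-- The unit sphere S^{d-1} in ℝ^d. -/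
abbrev Sd (d : ℕ) := Metric.sphere (0 : Rd d) 1

/-- The surface measure on the unit sphere. -/
noncomputable def sphMeasure (d : ℕ) : Measure (Sd d) :=
  (volume : Measure (Rd d)).toSphere

/-- k₊ = (k + |k| n)/2. -/
noncomputable def kplus {d : ℕ} (k : Rd d) (n : Sd d) : Rd d :=
  (2⁻¹ : ℝ) • (k + ‖k‖ • (n : Rd d))

/-- k₋ = (k − |k| n)/2. -/
noncomputable def kminus {d : ℕ} (k : Rd d) (n : Sd d) : Rd d :=
  (2⁻¹ : ℝ) • (k - ‖k‖ • (n : Rd d))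

/-- k̂·n for k ≠ 0. -/
noncomputable def khatDot {d : ℕ} (k : Rd d) (n : Sd d) : ℝ :=
  inner ℝ (‖k‖⁻¹ • k) (n : Rd d)

/-- The gain operator I⁺(φ,ψ). -/
noncomputable def Iplus {d : ℕ} (g : ℝ → ℝ) (φ ψ : Rd d → ℂ) (k : Rd d) : ℂ :=
  if k = 0 then φ 0 * ψ 0
  else ∫ n, (g (khatDot k n) : ℂ) * φ (kplus k n) * ψ (kminus k n) ∂(sphMeasure d)

/-- Γ[φ] = I⁺(φ,φ). -/
noncomputable def Gam {d : ℕ} (g : ℝ → ℝ) (φ : Rd d → ℂ) : Rd d → ℂ :=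
  Iplus g φ φ

/-- The linearized operator L, complex-valued version. -/
noncomputable def LopC {d : ℕ} (g : ℝ → ℝ) (ψ : Rd d → ℂ) (k : Rd d) : ℂ :=
  if k = 0 then 2 * ψ 0
  else ∫ n, (g (khatDot k n) : ℂ) * (ψ (kplus k n) + ψ (kminus k n)) ∂(sphMeasure d)

/-- The linearized operator L, real-valued version. -/
noncomputable def LopR {d : ℕ} (g : ℝ → ℝ) (ψ : Rd d → ℝ) (k : Rd d) : ℝ :=
  if k = 0 then 2 * ψ 0
  else ∫ n, g (khatDot k n) * (ψ (kplus k n) + ψ (kminus k n)) ∂(sphMeasure d)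

/-- The Fourier transform (characteristic function) of a measure. -/
noncomputable def charFun {d : ℕ} (μ : Measure (Rd d)) (k : Rd d) : ℂ :=
  ∫ v, Complex.exp (-(Complex.I * ((inner ℝ k v : ℝ) : ℂ))) ∂μ

/-- φ is the characteristic function of a Borel probability measure on ℝ^d. -/
def IsCharFun {d : ℕ} (φ : Rd d → ℂ) : Prop :=
  ∃ μ : Measure (Rd d), IsProbabilityMeasure μ ∧ φ = _root_.charFun μ

/-- A matrix acting on ℝ^d as a continuous linear map. -/
noncomputable def matCLM {d : ℕ} (A : Matrix (Fin d) (Fin d) ℝ) : Rd d →L[ℝ] Rd d :=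
  LinearMap.toContinuousLinearMap (Matrix.toEuclideanLin A)

/-- The operator norm ‖A‖ = sup_{|k|=1} |Ak|. -/
noncomputable def opN {d : ℕ} (A : Matrix (Fin d) (Fin d) ℝ) : ℝ := ‖matCLM A‖

/-- e^{tA} k, matrix exponential applied to a vector. -/
noncomputable def expA {d : ℕ} (A : Matrix (Fin d) (Fin d) ℝ) (t : ℝ) (k : Rd d) : Rd d :=
  matCLM (NormedSpace.exp (t • A)) k

/-- A mild solution of the Fourier-transformed equation ∂ₜφ + φ + (Ak)·∂ₖφ = Γ[φ]. -/
def IsMildSolution {d : ℕ} (g : ℝ → ℝ) (A : Matrix (Fin d) (Fin d) ℝ)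
    (φ₀ : Rd d → ℂ) (φ : ℝ → Rd d → ℂ) : Prop :=
  (∀ t, 0 ≤ t → IsCharFun (φ t)) ∧
  (∀ t, 0 ≤ t → ∀ ε > (0:ℝ), ∃ δ > (0:ℝ), ∀ s, 0 ≤ s → |s - t| < δ →
      ∀ k, ‖φ s k - φ t k‖ ≤ ε) ∧
  (∀ t, 0 ≤ t → ∀ k, φ t k =
      (Real.exp (-t) : ℂ) * φ₀ (expA A (-t) k)
        + ∫ τ in (0:ℝ)..t, (Real.exp (-(t - τ)) : ℂ) * Gam g (φ τ) (expA A (-(t - τ)) k))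


open scoped RealInnerProductSpace

/-!
The squared lengths of `k₊` and `k₋` are `|k|² (1 ± k̂·n) / 2`, so `L` maps `|k|^p` to
`(1 - λ(p)) |k|^p`, and `1 - λ(p) ≥ 0` because `g ≥ 0`. With `|e^{-sA} k| ≤ e^{s‖A‖} |k|` the
right-hand side is then at most `|k|^p (e^{-ct} + (c - μ) ∫₀ᵗ e^{-c(t-τ)} e^{-μτ} dτ)`, where
`c = 1 - p‖A‖` and `μ = λ(p) - p‖A‖`; this is exactly `|k|^p e^{-μt}`, since `e^{-μt}` solves
`f' = -c f + (c - μ) f`.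
-/

section MatrixExponential

open NormedSpace

-- Not `[NormOneClass 𝔸]`: the algebra of `0 × 0` matrices is trivial.
lemma norm_exp_le_exp_norm_of_norm_one_le {𝔸 : Type*} [NormedRing 𝔸] [NormedAlgebra ℝ 𝔸]
    [CompleteSpace 𝔸] (h1 : ‖(1 : 𝔸)‖ ≤ 1) (x : 𝔸) : ‖exp x‖ ≤ Real.exp ‖x‖ := by
  rw [exp_eq_tsum ℝ, Real.exp_eq_exp_ℝ, exp_eq_tsum_div]
  refine (norm_tsum_le_tsum_norm (norm_expSeries_summable' x)).trans <|
    (norm_expSeries_summable' x).tsum_le_tsum (fun n => ?_) (Real.summable_pow_div_factorial ‖x‖)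
  rw [norm_smul, norm_inv, Real.norm_natCast, inv_mul_eq_div]
  gcongr
  rcases n with _ | n
  · simpa using h1
  · exact norm_pow_le' x n.succ_pos

variable {d : ℕ}

lemma continuous_matCLM : Continuous (matCLM (d := d)) :=
  LinearMap.continuous_of_finiteDimensional
    (Matrix.toEuclideanCLM (𝕜 := ℝ) (n := Fin d)).toAlgEquiv.toLinearMap

open scoped Matrix.Norms.L2Operator

lemma continuous_expA (A : Matrix (Fin d) (Fin d) ℝ) (k : Rd d) :
    Continuous fun s => expA A s k := by
  let : NormedAlgebra ℚ (Matrix (Fin d) (Fin d) ℝ) := .restrictScalars ℚ ℝ _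
  exact (continuous_matCLM.comp (exp_continuous.comp
    (continuous_id.smul continuous_const))).clm_apply continuous_const

-- In the `L2Operator` norm, `‖A‖` is `opN A` by definition.
lemma norm_expA_le (A : Matrix (Fin d) (Fin d) ℝ) (s : ℝ) (k : Rd d) :
    ‖expA A s k‖ ≤ Real.exp (|s| * opN A) * ‖k‖ := by
  have h1 : ‖(1 : Matrix (Fin d) (Fin d) ℝ)‖ ≤ 1 := by
    rw [Matrix.cstar_norm_def, map_one]
    exact ContinuousLinearMap.norm_id_le
  calc ‖expA A s k‖ ≤ ‖exp (s • A)‖ * ‖k‖ := (matCLM _).le_opNorm k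
    _ ≤ Real.exp ‖s • A‖ * ‖k‖ := by gcongr; exact norm_exp_le_exp_norm_of_norm_one_le h1 _
    _ = Real.exp (|s| * opN A) * ‖k‖ := by rw [norm_smul, Real.norm_eq_abs]; rfl

lemma norm_expA_rpow_le (A : Matrix (Fin d) (Fin d) ℝ) (s : ℝ) (k : Rd d) {p : ℝ}
    (hp : 0 ≤ p) : ‖expA A s k‖ ^ p ≤ Real.exp (p * opN A * |s|) * ‖k‖ ^ p :=
  calc ‖expA A s k‖ ^ p ≤ (Real.exp (|s| * opN A) * ‖k‖) ^ p := by
        gcongr; exact norm_expA_le A s k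
    _ = Real.exp (p * opN A * |s|) * ‖k‖ ^ p := by
        rw [Real.mul_rpow (Real.exp_pos _).le (norm_nonneg k), ← Real.exp_mul]; ring_nf

end MatrixExponential

section CollisionGeometry

variable {d : ℕ}

def halfPowSum (p x : ℝ) : ℝ := ((1 + x) / 2) ^ (p / 2) + ((1 - x) / 2) ^ (p / 2)

lemma halfPowSum_nonneg (p : ℝ) {x : ℝ} (hx : |x| ≤ 1) : 0 ≤ halfPowSum p x := by
  obtain ⟨h₁, h₂⟩ := abs_le.1 hx
  have := Real.rpow_nonneg (show 0 ≤ (1 + x) / 2 by linarith) (p / 2)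
  have := Real.rpow_nonneg (show 0 ≤ (1 - x) / 2 by linarith) (p / 2)
  unfold halfPowSum
  linarith

lemma halfPowSum_le_two {p x : ℝ} (hp : 0 ≤ p) (hx : |x| ≤ 1) : halfPowSum p x ≤ 2 := by
  obtain ⟨h₁, h₂⟩ := abs_le.1 hx
  have := Real.rpow_le_one (by linarith : 0 ≤ (1 + x) / 2) (by linarith) (by positivity : 0 ≤ p / 2)
  have := Real.rpow_le_one (by linarith : 0 ≤ (1 - x) / 2) (by linarith) (by positivity : 0 ≤ p / 2)
  unfold halfPowSum
  linarith

lemma abs_inner_sphere_le_one {ω : Rd d} (hω : ‖ω‖ = 1) (n : Sd d) : |⟪ω, (n : Rd d)⟫| ≤ 1 :=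
  (abs_real_inner_le_norm _ _).trans (by rw [hω, norm_eq_of_mem_sphere, one_mul])

lemma rpow_eq_mul_rpow_half_of_sq_eq {x y c : ℝ} (hx : 0 ≤ x) (hy : 0 ≤ y) (hc : 0 ≤ c)
    (h : x ^ 2 = y ^ 2 * c) (p : ℝ) : x ^ p = y ^ p * c ^ (p / 2) := by
  have hsq : ∀ z : ℝ, 0 ≤ z → z ^ p = (z ^ 2) ^ (p / 2) := fun z hz => by
    rw [← Real.rpow_natCast z 2, ← Real.rpow_mul hz]; congr 1; push_cast; ring
  rw [hsq x hx, h, Real.mul_rpow (by positivity) hc, ← hsq y hy]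

lemma inner_eq_norm_mul_khatDot {k : Rd d} (hk : k ≠ 0) (n : Sd d) :
    ⟪k, (n : Rd d)⟫ = ‖k‖ * khatDot k n := by
  rw [khatDot, real_inner_smul_left, ← mul_assoc, mul_inv_cancel₀ (norm_ne_zero_iff.2 hk),
    one_mul]

lemma norm_kplus_sq {k : Rd d} (hk : k ≠ 0) (n : Sd d) :
    ‖kplus k n‖ ^ 2 = ‖k‖ ^ 2 * ((1 + khatDot k n) / 2) := by
  rw [kplus, norm_smul, mul_pow, norm_add_sq_real, real_inner_smul_right,
    inner_eq_norm_mul_khatDot hk, norm_smul, norm_eq_of_mem_sphere]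
  simp only [norm_inv, Real.norm_ofNat, norm_norm]
  ring

lemma norm_kminus_sq {k : Rd d} (hk : k ≠ 0) (n : Sd d) :
    ‖kminus k n‖ ^ 2 = ‖k‖ ^ 2 * ((1 - khatDot k n) / 2) := by
  rw [kminus, norm_smul, mul_pow, norm_sub_sq_real, real_inner_smul_right,
    inner_eq_norm_mul_khatDot hk, norm_smul, norm_eq_of_mem_sphere]
  simp only [norm_inv, Real.norm_ofNat, norm_norm]
  ring

lemma abs_khatDot_le_one {k : Rd d} (hk : k ≠ 0) (n : Sd d) : |khatDot k n| ≤ 1 :=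
  abs_inner_sphere_le_one (norm_smul_inv_norm hk) n

lemma norm_kplus_rpow_add_norm_kminus_rpow {k : Rd d} (hk : k ≠ 0) (n : Sd d) (p : ℝ) :
    ‖kplus k n‖ ^ p + ‖kminus k n‖ ^ p = ‖k‖ ^ p * halfPowSum p (khatDot k n) := by
  obtain ⟨h₁, h₂⟩ := abs_le.1 (abs_khatDot_le_one hk n)
  rw [rpow_eq_mul_rpow_half_of_sq_eq (norm_nonneg _) (norm_nonneg k) (by linarith)
      (norm_kplus_sq hk n) p,
    rpow_eq_mul_rpow_half_of_sq_eq (norm_nonneg _) (norm_nonneg k) (by linarith)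
      (norm_kminus_sq hk n) p, halfPowSum]
  ring

end CollisionGeometry

section LinearizedOperator

variable {d : ℕ} {g : ℝ → ℝ} {p lam : ℝ}

lemma integral_mul_halfPowSum (hp : 0 ≤ p) {ω : Rd d} (hω : ‖ω‖ = 1)
    (hg_norm : ∫ n, g ⟪ω, (n : Rd d)⟫ ∂(sphMeasure d) = 1)
    (hlam : ∫ n, g ⟪ω, (n : Rd d)⟫ *
        (1 - ((1 + ⟪ω, (n : Rd d)⟫) / 2) ^ (p / 2) - ((1 - ⟪ω, (n : Rd d)⟫) / 2) ^ (p / 2))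
        ∂(sphMeasure d) = lam) :
    ∫ n, g ⟪ω, (n : Rd d)⟫ * halfPowSum p ⟪ω, (n : Rd d)⟫ ∂(sphMeasure d) = 1 - lam := by
  have hg : Integrable (fun n : Sd d => g ⟪ω, (n : Rd d)⟫) (sphMeasure d) :=
    .of_integral_ne_zero (by rw [hg_norm]; exact one_ne_zero)
  have hgh : Integrable (fun n : Sd d => g ⟪ω, (n : Rd d)⟫ * halfPowSum p ⟪ω, (n : Rd d)⟫)
      (sphMeasure d) := by
    refine hg.mul_bdd (c := 2) ?_ (.of_forall fun n => ?_)
    · have : Measurable (halfPowSum p) := by unfold halfPowSum; fun_prop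
      exact (this.comp (continuous_const.inner continuous_subtype_val).measurable)
        |>.aestronglyMeasurable
    · have hn := abs_inner_sphere_le_one hω n
      rw [Real.norm_of_nonneg (halfPowSum_nonneg p hn)]
      exact halfPowSum_le_two hp hn
  have hsplit : ∫ n, g ⟪ω, (n : Rd d)⟫ *
        (1 - ((1 + ⟪ω, (n : Rd d)⟫) / 2) ^ (p / 2) - ((1 - ⟪ω, (n : Rd d)⟫) / 2) ^ (p / 2))
        ∂(sphMeasure d)
      = ∫ n, g ⟪ω, (n : Rd d)⟫ - g ⟪ω, (n : Rd d)⟫ * halfPowSum p ⟪ω, (n : Rd d)⟫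
        ∂(sphMeasure d) :=
    integral_congr_ae (.of_forall fun n => by simp only [halfPowSum]; ring)
  rw [← hlam, hsplit, integral_sub hg hgh, hg_norm]
  ring

lemma lam_le_one (hg_nonneg : ∀ x, 0 ≤ g x) (hp : 0 ≤ p) {ω : Rd d} (hω : ‖ω‖ = 1)
    (hg_norm : ∫ n, g ⟪ω, (n : Rd d)⟫ ∂(sphMeasure d) = 1)
    (hlam : ∫ n, g ⟪ω, (n : Rd d)⟫ *
        (1 - ((1 + ⟪ω, (n : Rd d)⟫) / 2) ^ (p / 2) - ((1 - ⟪ω, (n : Rd d)⟫) / 2) ^ (p / 2))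
        ∂(sphMeasure d) = lam) :
    lam ≤ 1 := by
  have h := integral_mul_halfPowSum hp hω hg_norm hlam
  have : 0 ≤ 1 - lam := h ▸ integral_nonneg fun n =>
    mul_nonneg (hg_nonneg _) (halfPowSum_nonneg p (abs_inner_sphere_le_one hω n))
  linarith

lemma LopR_norm_rpow (hp : 0 < p)
    (hg_norm : ∀ ω : Rd d, ‖ω‖ = 1 → ∫ n, g ⟪ω, (n : Rd d)⟫ ∂(sphMeasure d) = 1)
    (hlam : ∀ ω : Rd d, ‖ω‖ = 1 →
      (∫ n, g ⟪ω, (n : Rd d)⟫ *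
          (1 - ((1 + ⟪ω, (n : Rd d)⟫) / 2) ^ (p / 2)
             - ((1 - ⟪ω, (n : Rd d)⟫) / 2) ^ (p / 2)) ∂(sphMeasure d)) = lam)
    (E : ℝ) (k : Rd d) :
    LopR g (fun x => ‖x‖ ^ p * E) k = (1 - lam) * (‖k‖ ^ p * E) := by
  rcases eq_or_ne k 0 with rfl | hk
  · simp [LopR, Real.zero_rpow hp.ne']
  have hω : ‖(‖k‖⁻¹ • k : Rd d)‖ = 1 := norm_smul_inv_norm hk
  have hintegrand (n : Sd d) :
      g (khatDot k n) * (‖kplus k n‖ ^ p * E + ‖kminus k n‖ ^ p * E)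
        = ‖k‖ ^ p * E * (g ⟪‖k‖⁻¹ • k, (n : Rd d)⟫ * halfPowSum p ⟪‖k‖⁻¹ • k, (n : Rd d)⟫) := by
    rw [← add_mul, norm_kplus_rpow_add_norm_kminus_rpow hk n, khatDot]
    ring
  rw [LopR, if_neg hk, integral_congr_ae (.of_forall hintegrand), integral_const_mul,
    integral_mul_halfPowSum hp.le hω (hg_norm _ hω) (hlam _ hω)]
  ring

end LinearizedOperator

lemma exp_neg_mul_add_integral_le {q : ℝ → ℝ} (hq : Continuous q) {K b lam t : ℝ}
    (hlam : lam ≤ 1) (ht : 0 ≤ t) (hqle : ∀ s ∈ Set.Icc 0 t, q s ≤ Real.exp (b * s) * K) :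
    Real.exp (-t) * q t
        + ∫ τ in (0 : ℝ)..t,
            Real.exp (-(t - τ)) * ((1 - lam) * (q (t - τ) * Real.exp (-(lam - b) * τ)))
      ≤ K * Real.exp (-(lam - b) * t) := by
  have hexp (τ : ℝ) : Real.exp (-(t - τ)) *
        ((1 - lam) * (Real.exp (b * (t - τ)) * K * Real.exp (-(lam - b) * τ)))
      = K * ((1 - lam) * Real.exp ((1 - lam) * τ + (b - 1) * t)) := by
    rw [show (1 - lam) * τ + (b - 1) * t = -(t - τ) + b * (t - τ) + -(lam - b) * τ by ring,
      Real.exp_add, Real.exp_add]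
    ring
  calc Real.exp (-t) * q t
        + ∫ τ in (0 : ℝ)..t,
            Real.exp (-(t - τ)) * ((1 - lam) * (q (t - τ) * Real.exp (-(lam - b) * τ)))
      ≤ Real.exp (-t) * (Real.exp (b * t) * K)
        + ∫ τ in (0 : ℝ)..t, Real.exp (-(t - τ)) *
            ((1 - lam) * (Real.exp (b * (t - τ)) * K * Real.exp (-(lam - b) * τ))) := by
        refine add_le_add (by gcongr; exact hqle t ⟨ht, le_rfl⟩) <|
          intervalIntegral.integral_mono_on ht ((by fun_prop : Continuous _).intervalIntegrable _ _)
            ((by fun_prop : Continuous _).intervalIntegrable _ _) fun τ hτ => ?_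
        have := hqle (t - τ) ⟨by linarith [hτ.2], by linarith [hτ.1]⟩
        have : 0 ≤ 1 - lam := by linarith
        gcongr
    _ = K * Real.exp (-(lam - b) * t) := by
        simp only [hexp, intervalIntegral.integral_const_mul]
        rw [intervalIntegral.mul_integral_comp_mul_add (f := Real.exp), integral_exp, mul_zero,
          zero_add, show (1 - lam) * t + (b - 1) * t = -(lam - b) * t by ring,
          show (b - 1) * t = -t + b * t by ring, Real.exp_add]
        ring

theorem up_is_supersolution_general (d : ℕ)
    (g : ℝ → ℝ) (hg_nonneg : ∀ x, 0 ≤ g x)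
    (hg_norm : ∀ ω : Rd d, ‖ω‖ = 1 → ∫ n, g ⟪ω, (n : Rd d)⟫ ∂(sphMeasure d) = 1)
    (p : ℝ) (hp : 0 < p)
    (A : Matrix (Fin d) (Fin d) ℝ)
    (lam : ℝ)
    (hlam : ∀ ω : Rd d, ‖ω‖ = 1 →
      (∫ n, g ⟪ω, (n : Rd d)⟫ *
          (1 - ((1 + ⟪ω, (n : Rd d)⟫) / 2) ^ (p / 2)
             - ((1 - ⟪ω, (n : Rd d)⟫) / 2) ^ (p / 2)) ∂(sphMeasure d)) = lam) :
    ∀ t, 0 ≤ t → ∀ k : Rd d,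
      Real.exp (-t) * ‖expA A (-t) k‖ ^ p
          + (∫ τ in (0:ℝ)..t, Real.exp (-(t - τ)) *
              LopR g (fun x => ‖x‖ ^ p * Real.exp (-(lam - p * opN A) * τ))
                (expA A (-(t - τ)) k))
        ≤ ‖k‖ ^ p * Real.exp (-(lam - p * opN A) * t) := by
  intro t ht k
  rcases eq_or_ne k 0 with rfl | hk
  · simp [expA, LopR, Real.zero_rpow hp.ne']
  have hω : ‖(‖k‖⁻¹ • k : Rd d)‖ = 1 := norm_smul_inv_norm hk
  simp only [LopR_norm_rpow hp hg_norm hlam]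
  refine exp_neg_mul_add_integral_le (q := fun s => ‖expA A (-s) k‖ ^ p)
    (((continuous_expA A k).comp continuous_neg).norm.rpow_const fun _ => Or.inr hp.le)
    (lam_le_one hg_nonneg hp.le hω (hg_norm _ hω) (hlam _ hω)) ht fun s hs => ?_
  simpa [abs_of_nonneg hs.1] using norm_expA_rpow_le A (-s) k hp.le

/-- The function u_p(k,t) = |k|^p e^{−(λ(p)−p‖A‖)t} is a supersolution
    of the linear problem with initial datum |k|^p. -/
theorem up_is_supersolution (d : ℕ) (hd : 2 ≤ d)
    (g : ℝ → ℝ) (hg_meas : Measurable g) (hg_nonneg : ∀ x, 0 ≤ g x)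
    (hg_norm : ∀ ω : Rd d, ‖ω‖ = 1 → ∫ n, g ⟪ω, (n : Rd d)⟫ ∂(sphMeasure d) = 1)
    (p : ℝ) (hp : 0 < p)
    (A : Matrix (Fin d) (Fin d) ℝ)
    (lam : ℝ)
    (hlam : ∀ ω : Rd d, ‖ω‖ = 1 →
      (∫ n, g ⟪ω, (n : Rd d)⟫ *
          (1 - ((1 + ⟪ω, (n : Rd d)⟫) / 2) ^ (p / 2)
             - ((1 - ⟪ω, (n : Rd d)⟫) / 2) ^ (p / 2)) ∂(sphMeasure d)) = lam) :
    ∀ t, 0 ≤ t → ∀ k : Rd d,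
      Real.exp (-t) * ‖expA A (-t) k‖ ^ p
          + (∫ τ in (0:ℝ)..t, Real.exp (-(t - τ)) *
              LopR g (fun x => ‖x‖ ^ p * Real.exp (-(lam - p * opN A) * τ))
                (expA A (-(t - τ)) k))
        ≤ ‖k‖ ^ p * Real.exp (-(lam - p * opN A) * t) :=
  up_is_supersolution_general d g hg_nonneg hg_norm p hp A lam hlam
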